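/- arXiv:1703.04287 — 6 statements merged into one kernel-verified Lean document; each statement's English description precedes it below -/
import Mathlib

section
/- Let κ(n) = [1,0]·A_{i_0}·A_{i_1}···A_{i_s}·[1,0]^T where i_s···i_1 i_0 is the base-k expansion of n. Then for all n ≥ 1 and a, b ∈ {0,...,k-1}, κ(k²n + kb + a) = (a+1)·κ(kn+b) + κ(n). -/
open Matrix

/-- The matrix `A_i = [[i+1,1],[1,0]]`. -/
def A (i : ℕ) : Matrix (Fin 2) (Fin 2) ℤ := !![(i : ℤ) + 1, 1; 1, 0]

/-- `κ(n) = [1,0]·A_{i₀}·A_{i₁}···A_{i_s}·[1,0]^T` where `i_s⋯i₁i₀` is the base-`k`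
expansion of `n` (`Nat.digits k n = [i₀, i₁, …, i_s]`), i.e. the `(0,0)` entry of the
product of the `A_i` taken with digits in order of increasing significance. -/
def kap (k n : ℕ) : ℤ :=
  ((Nat.digits k n).foldr (fun i M => A i * M) (1 : Matrix (Fin 2) (Fin 2) ℤ)) 0 0

theorem stmt1 (k : ℕ) (hk : 2 ≤ k) (n : ℕ) (hn : 1 ≤ n) (a b : ℕ)
    (ha : a < k) (hb : b < k) :
    kap k (k ^ 2 * n + k * b + a) = ((a : ℤ) + 1) * kap k (k * n + b) + kap k n := by
  have hk1 : 1 < k := hk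
  have h0 : 0 < n := hn
  have hm1 : 0 < k * n + b := by positivity
  have hm2 : 0 < k ^ 2 * n + k * b + a := by positivity
  have e1 : (k ^ 2 * n + k * b + a) % k = a := by
    have : k ^ 2 * n + k * b + a = (k * n + b) * k + a := by ring
    rw [this, Nat.mul_add_mod', Nat.mod_eq_of_lt ha]
  have e2 : (k ^ 2 * n + k * b + a) / k = k * n + b := by
    have h : k ^ 2 * n + k * b + a = k * (k * n + b) + a := by ring
    rw [h, Nat.mul_add_div (by omega : 0 < k), Nat.div_eq_of_lt ha, Nat.add_zero]
  have e3 : (k * n + b) % k = b := by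
    rw [Nat.mul_add_mod, Nat.mod_eq_of_lt hb]
  have e4 : (k * n + b) / k = n := by
    rw [Nat.mul_add_div (by omega : 0 < k), Nat.div_eq_of_lt hb, Nat.add_zero]
  have d1 : Nat.digits k (k ^ 2 * n + k * b + a) = a :: b :: Nat.digits k n := by
    rw [Nat.digits_def' hk1 hm2, e1, e2, Nat.digits_def' hk1 hm1, e3, e4]
  have d2 : Nat.digits k (k * n + b) = b :: Nat.digits k n := by
    rw [Nat.digits_def' hk1 hm1, e3, e4]
  set N := (Nat.digits k n).foldr (fun i M => A i * M) (1 : Matrix (Fin 2) (Fin 2) ℤ)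
  simp only [kap, d1, d2, List.foldr_cons]
  show (A a * (A b * N)) 0 0 = ((a : ℤ) + 1) * (A b * N) 0 0 + N 0 0
  have h1 : (A a * (A b * N)) 0 0 = ((a : ℤ) + 1) * (A b * N) 0 0 + (A b * N) 1 0 := by
    simp [A, Matrix.mul_apply, Fin.sum_univ_two, vecMul, dotProduct]
  have h2 : (A b * N) 1 0 = N 0 0 := by
    simp [A, Matrix.mul_apply, Fin.sum_univ_two]
  rw [h1, h2]
end

section
/- The formal power series K(z) = Σ_{n≥0} κ(n) z^n satisfies the Mahler-type functional equation K(z) − (Σ_{a=0}^{k−1} (a+1) z^a)·K(z^k) − (Σ_{a=0}^{k²−1} z^a)·K(z^{k²}) = −Σ_{n=0}^{k−1} z^n. -/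
open Matrix

/-!
Peeling off the lowest digit gives `κ(n) = (i₀ + 1)·κ(⌊n/k⌋) + κ(⌊n/k²⌋)` for `n ≥ k`:
the second row of `A_i` is `[1, 0]`, so the `(1,0)` entry of `A_{i₁}⋯A_{i_s}` is `κ(⌊n/k²⌋)`.
The coefficient of `z^n` in `(Σ_{a<m} c_a z^a)·F(z^m)` is `c_{n mod m}·f(⌊n/m⌋)`, since only
`a = n mod m` contributes. So the functional equation is this recurrence, read off coefficient by
coefficient, with the defect `-1` at the coefficients `n < k`.
-/

lemma A_mul_apply_zero_zero (i : ℕ) (M : Matrix (Fin 2) (Fin 2) ℤ) :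
    (A i * M) 0 0 = ((i : ℤ) + 1) * M 0 0 + M 1 0 := by
  simp [A, mul_apply, Fin.sum_univ_two]

lemma A_mul_apply_one_zero (i : ℕ) (M : Matrix (Fin 2) (Fin 2) ℤ) : (A i * M) 1 0 = M 0 0 := by
  simp [A, mul_apply, Fin.sum_univ_two]

def digitMatrixProd (k n : ℕ) : Matrix (Fin 2) (Fin 2) ℤ :=
  (Nat.digits k n).foldr (fun i M => A i * M) 1

lemma kap_eq_digitMatrixProd (k n : ℕ) : kap k n = digitMatrixProd k n 0 0 := rfl

lemma digitMatrixProd_of_pos {k n : ℕ} (hk : 1 < k) (hn : 0 < n) :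
    digitMatrixProd k n = A (n % k) * digitMatrixProd k (n / k) := by
  rw [digitMatrixProd, Nat.digits_def' hk hn, List.foldr_cons]
  rfl

lemma kap_of_lt {k n : ℕ} (hn : n < k) : kap k n = (n : ℤ) + 1 := by
  rcases Nat.eq_zero_or_pos n with rfl | hn0
  · simp [kap]
  rw [kap_eq_digitMatrixProd, digitMatrixProd_of_pos (by omega) hn0, A_mul_apply_zero_zero,
    Nat.mod_eq_of_lt hn, Nat.div_eq_of_lt hn]
  simp [digitMatrixProd]

lemma kap_of_le {k n : ℕ} (hk : 1 < k) (hn : k ≤ n) :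
    kap k n = ((n % k : ℕ) + 1 : ℤ) * kap k (n / k) + kap k (n / k ^ 2) := by
  have hq : 0 < n / k := Nat.div_pos hn (by omega)
  rw [kap_eq_digitMatrixProd, digitMatrixProd_of_pos hk (by omega), A_mul_apply_zero_zero,
    digitMatrixProd_of_pos hk hq, A_mul_apply_one_zero, ← digitMatrixProd_of_pos hk hq,
    Nat.div_div_eq_div_mul, ← pow_two]
  rfl

lemma kap_sub_mul_kap_div_sub_kap_div_sq {k : ℕ} (hk : 1 < k) (n : ℕ) :
    kap k n - ((n % k : ℕ) + 1 : ℤ) * kap k (n / k) - kap k (n / k ^ 2)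
      = if n < k then -1 else 0 := by
  split_ifs with hn
  · have hsq : n < k ^ 2 := hn.trans_le (Nat.le_self_pow two_ne_zero k)
    rw [Nat.mod_eq_of_lt hn, Nat.div_eq_of_lt hn, Nat.div_eq_of_lt hsq, kap_of_lt hn,
      kap_of_lt (by omega : 0 < k)]
    ring
  · rw [kap_of_le hk (not_lt.mp hn)]
    ring

namespace PowerSeries

variable {R : Type*} [CommSemiring R]

lemma coeff_X_pow_mul_mk_ite_dvd {m a : ℕ} (ha : a < m) (f : ℕ → R) (n : ℕ) :
    coeff n (X ^ a * mk fun n => if m ∣ n then f (n / m) else 0)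
      = if n % m = a then f (n / m) else 0 := by
  rw [coeff_X_pow_mul', coeff_mk]
  by_cases han : a ≤ n
  · have hmod : m ∣ n - a ↔ n % m = a := by
      rw [← Nat.modEq_iff_dvd' han, Nat.ModEq, Nat.mod_eq_of_lt ha, eq_comm]
    by_cases hna : n % m = a
    · have hdiv : (n - a) / m = n / m := by
        have hsub : n - a = m * (n / m) := by have := Nat.div_add_mod n m; omega
        rw [hsub, Nat.mul_div_cancel_left _ (by omega)]
      rw [if_pos han, if_pos (hmod.mpr hna), if_pos hna, hdiv]
    · rw [if_pos han, if_neg (mt hmod.mp hna), if_neg hna]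
  · have hna : n % m ≠ a := fun h => han (h ▸ Nat.mod_le n m)
    rw [if_neg han, if_neg hna]

lemma coeff_sum_C_mul_X_pow_mul_mk_ite_dvd {m : ℕ} (hm : 0 < m) (c f : ℕ → R) (n : ℕ) :
    coeff n ((∑ a ∈ Finset.range m, C (c a) * X ^ a) *
        mk fun n => if m ∣ n then f (n / m) else 0) = c (n % m) * f (n / m) := by
  rw [Finset.sum_mul, map_sum, Finset.sum_congr rfl fun a ha => by
    rw [mul_assoc, coeff_C_mul, coeff_X_pow_mul_mk_ite_dvd (Finset.mem_range.mp ha), mul_ite,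
      mul_zero], Finset.sum_ite_eq, if_pos (Finset.mem_range.mpr (Nat.mod_lt n hm))]

end PowerSeries

open PowerSeries in
/-- The Mahler functional equation
`K(z) − (Σ_{a<k}(a+1)z^a)·K(z^k) − (Σ_{a<k²}z^a)·K(z^{k²}) = −Σ_{n<k} z^n`,
where `K(z) = Σ κ(n) z^n` and `K(z^{k})`, `K(z^{k²})` are the formal substitutions,
whose `n`-th coefficient is `κ(n/k^j)` if `k^j ∣ n` and `0` otherwise. -/
theorem stmt4 (k : ℕ) (hk : 2 ≤ k) :
    (PowerSeries.mk fun n => kap k n)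
      - (∑ a ∈ Finset.range k, PowerSeries.C ((a : ℤ) + 1) * (PowerSeries.X : ℤ⟦X⟧) ^ a)
          * (PowerSeries.mk fun n => if k ∣ n then kap k (n / k) else 0)
      - (∑ a ∈ Finset.range (k ^ 2), (PowerSeries.X : ℤ⟦X⟧) ^ a)
          * (PowerSeries.mk fun n => if k ^ 2 ∣ n then kap k (n / k ^ 2) else 0)
    = -∑ n ∈ Finset.range k, (PowerSeries.X : ℤ⟦X⟧) ^ n := by
  ext n
  have h_first := coeff_sum_C_mul_X_pow_mul_mk_ite_dvd (m := k) (by omega)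
    (fun a => (a : ℤ) + 1) (kap k ·) n
  have h_second := coeff_sum_C_mul_X_pow_mul_mk_ite_dvd (m := k ^ 2) (by positivity)
    (fun _ => (1 : ℤ)) (kap k ·) n
  simp only [map_one, one_mul] at h_second
  have h_rhs : coeff n (-∑ a ∈ Finset.range k, (X : ℤ⟦X⟧) ^ a) = if n < k then -1 else 0 := by
    simp [coeff_X_pow, apply_ite Neg.neg]
  rw [map_sub, map_sub, coeff_mk, h_first, h_second, h_rhs,
    kap_sub_mul_kap_div_sub_kap_div_sq (by omega : 1 < k)]
end

section
/- For every n ≥ 0 and every m ≥ 0, the coefficient of z^n in K(z^{k^m}) is κ(n/k^m) if k^m divides n, and 0 otherwise; moreover, as an identity of coefficients the functional equation reads: for n = k²m + kb + a with m ≥ 1 and a, b ∈ {0,...,k−1}, κ(n) = (a+1)κ(km+b) + κ(m). -/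
open Matrix

/-- The formal substitution `K(z^{k^m})` of `z ↦ z^{k^m}` in `K(z) = Σ_{j≥0} κ(j) z^j`:
the power series whose coefficient at `k^m · j` is `κ(j)`, all other coefficients zero. -/
noncomputable def Ksub (k m : ℕ) : PowerSeries ℤ :=
  PowerSeries.mk fun n => if k ^ m ∣ n then kap k (n / k ^ m) else 0

/-- For every `n ≥ 0`, `m ≥ 0`, the coefficient of `z^n` in `K(z^{k^m})` is `κ(n/k^m)`
if `k^m ∣ n` and `0` otherwise; and, at the level of coefficients, for
`n = k²m + kb + a` with `m ≥ 1`, `a, b ∈ {0,…,k−1}`: `κ(n) = (a+1)κ(km+b) + κ(m)`. -/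
theorem stmt5 (k : ℕ) (hk : 2 ≤ k) :
    (∀ m n : ℕ, PowerSeries.coeff n (Ksub k m)
        = if k ^ m ∣ n then kap k (n / k ^ m) else 0) ∧
    (∀ m a b : ℕ, 1 ≤ m → a < k → b < k →
      kap k (k ^ 2 * m + k * b + a) = ((a : ℤ) + 1) * kap k (k * m + b) + kap k m) := by
  have hk1 : 1 < k := hk
  constructor
  · intro m n
    simp [Ksub]
  · intro m a b hm ha hb
    have hmb : 0 < k * m + b := by positivity
    have hn : 0 < k ^ 2 * m + k * b + a := by positivity
    have key : k ^ 2 * m + k * b + a = k * (k * m + b) + a := by ring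
    have e1 : Nat.digits k (k ^ 2 * m + k * b + a)
        = a :: Nat.digits k (k * m + b) := by
      rw [Nat.digits_def' hk1 hn, key]
      congr 1
      · rw [Nat.mul_add_mod, Nat.mod_eq_of_lt ha]
      · rw [Nat.mul_add_div (by omega : 0 < k), Nat.div_eq_of_lt ha, Nat.add_zero]
    have e2 : Nat.digits k (k * m + b) = b :: Nat.digits k m := by
      rw [Nat.digits_def' hk1 hmb]
      congr 1
      · rw [Nat.mul_add_mod, Nat.mod_eq_of_lt hb]
      · rw [Nat.mul_add_div (by omega : 0 < k), Nat.div_eq_of_lt hb, Nat.add_zero]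
    set P := (Nat.digits k m).foldr (fun i M => A i * M)
      (1 : Matrix (Fin 2) (Fin 2) ℤ) with hP
    have h1 : kap k (k * m + b) = (A b * P) 0 0 := by
      rw [kap, e2]; rfl
    have h2 : kap k m = P 0 0 := rfl
    have h3 : kap k (k ^ 2 * m + k * b + a) = (A a * (A b * P)) 0 0 := by
      rw [kap, e1, e2]; rfl
    rw [h1, h2, h3]
    simp [A, Matrix.mul_apply, Fin.sum_univ_two, Matrix.vecMul, dotProduct]
end

section
/- Let k = 2 and define κ₂(n) by the matrix product with A_0 = [[1,1],[1,0]], A_1 = [[2,1],[1,0]]. Then for every n ≥ 1, the maximum of κ₂(a) over a ∈ [2^{n−1}, 2^n) is attained at a = 2^n − 1, i.e. max_{2^{n−1} ≤ a < 2^n} κ₂(a) = κ₂(2^n − 1). -/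
open Matrix

/-- Product of the `A` matrices over a digit list. -/
def P (l : List ℕ) : Matrix (Fin 2) (Fin 2) ℤ :=
  l.foldr (fun i M => A i * M) 1

lemma A_nonneg (d : ℕ) (i j : Fin 2) : 0 ≤ A d i j := by
  fin_cases i <;> fin_cases j <;> simp [A] <;> positivity

lemma A_mono {d₁ d₂ : ℕ} (h : d₁ ≤ d₂) (i j : Fin 2) : A d₁ i j ≤ A d₂ i j := by
  fin_cases i <;> fin_cases j <;> simp [A] <;> exact_mod_cast h

lemma P_nonneg (l : List ℕ) (i j : Fin 2) : 0 ≤ P l i j := by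
  induction l generalizing i j with
  | nil =>
    simp only [P, List.foldr_nil, Matrix.one_apply]
    split <;> norm_num
  | cons d l ih =>
    simp only [P, List.foldr_cons] at *
    rw [Matrix.mul_apply]
    exact Finset.sum_nonneg fun k _ => mul_nonneg (A_nonneg d i k) (ih k j)

lemma P_mono {l₁ l₂ : List ℕ} (h : List.Forall₂ (· ≤ ·) l₁ l₂) (i j : Fin 2) :
    P l₁ i j ≤ P l₂ i j := by
  induction h generalizing i j with
  | nil => exact le_rfl
  | @cons a b l₁ l₂ hab htl ih =>
    simp only [P, List.foldr_cons] at *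
    rw [Matrix.mul_apply, Matrix.mul_apply]
    refine Finset.sum_le_sum fun k _ => mul_le_mul (A_mono hab i k) (ih k j)
      (P_nonneg l₁ k j) (A_nonneg b i k)

lemma digits_pow_sub_one (n : ℕ) : Nat.digits 2 (2 ^ n - 1) = List.replicate n 1 := by
  induction n with
  | zero => simp
  | succ n ih =>
    have h : 2 ^ (n + 1) - 1 = 2 * (2 ^ n - 1) + 1 := by
      have : 1 ≤ 2 ^ n := Nat.one_le_two_pow
      ring_nf
      omega
    rw [h, Nat.digits_def' (by norm_num : 1 < 2) (by omega)]
    have h1 : (2 * (2 ^ n - 1) + 1) % 2 = 1 := by omega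
    have h2 : (2 * (2 ^ n - 1) + 1) / 2 = 2 ^ n - 1 := by omega
    rw [h1, h2, ih, List.replicate_succ]

lemma forall2_replicate {l : List ℕ} (h : ∀ x ∈ l, x ≤ 1) :
    List.Forall₂ (· ≤ ·) l (List.replicate l.length 1) := by
  induction l with
  | nil => simp
  | cons a l ih =>
    simp only [List.length_cons, List.replicate_succ]
    exact List.Forall₂.cons (h a (by simp)) (ih fun x hx => h x (by simp [hx]))

/-- For `k = 2` and every `n ≥ 1`, the maximum of `κ₂(a)` over `a ∈ [2^{n−1}, 2^n)` is
attained at `a = 2^n − 1`. -/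
theorem stmt8 (n : ℕ) (hn : 1 ≤ n) :
    IsGreatest ((fun a => kap 2 a) '' Set.Ico (2 ^ (n - 1)) (2 ^ n)) (kap 2 (2 ^ n - 1)) := by
  have hp : (1:ℕ) ≤ 2 ^ (n-1) := Nat.one_le_two_pow
  have hpow : 2 ^ n = 2 * 2 ^ (n - 1) := by
    conv_lhs => rw [show n = (n-1) + 1 by omega]
    ring
  constructor
  · exact ⟨2 ^ n - 1, ⟨by omega, by omega⟩, rfl⟩
  · rintro x ⟨a, ⟨ha1, ha2⟩, rfl⟩
    have ha0 : a ≠ 0 := by omega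
    have hlen : (Nat.digits 2 a).length = n := by
      rw [Nat.digits_len 2 a (by norm_num) ha0]
      have := Nat.log_eq_of_pow_le_of_lt_pow (b := 2) (m := n - 1) ha1 (by omega)
      omega
    have hdig : ∀ x ∈ Nat.digits 2 a, x ≤ 1 := fun x hx =>
      Nat.lt_succ_iff.mp (Nat.digits_lt_base (by norm_num) hx)
    have := P_mono (l₁ := Nat.digits 2 a) (l₂ := List.replicate n 1)
      (hlen ▸ forall2_replicate hdig) 0 0
    simpa [kap, digits_pow_sub_one, P] using this
end

section
/- Suppose p_0,...,p_M ∈ ℚ[z] satisfy, for some rational function λ(z) = a(z)/b(z) with gcd(a,b)=1, the identity λ(z)·Σ_{m=0}^M p_m(z) y^m = Σ_{m=0}^M p_{M−m}(z^k)·((z−1)(z^k−1)y + s(z))^m as polynomials in y over ℚ(z), where s(z) = −(k+2)z^k − Σ_{a=0}^{k−1} z^a. If gcd(p_0,...,p_M) = 1, then b(z) is a constant. -/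
open Polynomial

/-- If `p₀,…,p_M ∈ ℚ[z]` with `gcd(p₀,…,p_M) = 1` satisfy, for a rational function
`λ(z) = a(z)/b(z)` in lowest terms, the identity
`λ(z)·Σ_m p_m(z) yᵐ = Σ_m p_{M−m}(z^k)·((z−1)(z^k−1)y + s(z))ᵐ` in `ℚ(z)[y]`,
where `s(z) = −(k+2)z^k − Σ_{a<k} z^a`, then `b(z)` is a constant. -/
theorem stmt13 (k M : ℕ) (hk : 2 ≤ k) (p : ℕ → Polynomial ℚ)
    (a b : Polynomial ℚ) (hb : b ≠ 0) (hab : IsCoprime a b)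
    (hgcd : ∀ q : Polynomial ℚ, (∀ m ≤ M, q ∣ p m) → IsUnit q)
    (s : Polynomial ℚ)
    (hs : s = -(C ((k : ℚ) + 2) * X ^ k) - ∑ i ∈ Finset.range k, X ^ i)
    (heq :
      Polynomial.C (algebraMap (Polynomial ℚ) (RatFunc ℚ) a
            / algebraMap (Polynomial ℚ) (RatFunc ℚ) b)
          * ∑ m ∈ Finset.range (M + 1),
              Polynomial.C (algebraMap (Polynomial ℚ) (RatFunc ℚ) (p m)) * X ^ m
        = ∑ m ∈ Finset.range (M + 1),
            Polynomial.C (algebraMap (Polynomial ℚ) (RatFunc ℚ) ((p (M - m)).comp (X ^ k)))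
              * (Polynomial.C (algebraMap (Polynomial ℚ) (RatFunc ℚ)
                    ((X - 1) * (X ^ k - 1))) * X
                  + Polynomial.C (algebraMap (Polynomial ℚ) (RatFunc ℚ) s)) ^ m) :
    b.natDegree = 0 := by
  set φ := algebraMap (Polynomial ℚ) (RatFunc ℚ) with hφ
  have hinj : Function.Injective φ := IsFractionRing.injective _ _
  have hbne : φ b ≠ 0 := fun h => hb (hinj (by simpa using h))
  set Q : Polynomial (Polynomial ℚ) :=
    ∑ m ∈ Finset.range (M + 1),
      Polynomial.C ((p (M - m)).comp (X ^ k)) *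
        (Polynomial.C ((X - 1) * (X ^ k - 1)) * X + Polynomial.C s) ^ m with hQ
  have hmap : (∑ m ∈ Finset.range (M + 1),
      Polynomial.C (φ ((p (M - m)).comp (X ^ k))) *
        (Polynomial.C (φ ((X - 1) * (X ^ k - 1))) * X + Polynomial.C (φ s)) ^ m)
      = Q.map φ := by
    simp [hQ, Polynomial.map_sum]
  rw [hmap] at heq
  have key : ∀ m ≤ M, b ∣ p m := by
    intro m hm
    have hc := congrArg (fun P => Polynomial.coeff P m) heq
    simp only [Polynomial.coeff_C_mul, Polynomial.coeff_map, Polynomial.finset_sum_coeff,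
      Polynomial.coeff_X_pow, mul_ite, mul_one, mul_zero, Finset.sum_ite_eq, Finset.sum_ite_eq',
      Finset.mem_range, Nat.lt_succ_iff, hm, if_true] at hc
    have h2 : φ a * φ (p m) = φ (Q.coeff m) * φ b := by
      rw [div_mul_eq_mul_div, div_eq_iff hbne] at hc
      exact hc
    have h3 : a * p m = Q.coeff m * b := hinj (by rw [map_mul, map_mul]; exact h2)
    exact hab.symm.dvd_of_dvd_mul_left ⟨Q.coeff m, by linear_combination h3⟩
  exact Polynomial.natDegree_eq_zero_of_isUnit (hgcd b key)
end

section
/- For all n ≥ 1, κ(kn) ≥ κ(n) and κ(kn + (k−1)) ≥ k·κ(n); consequently κ(k^m·n) ≥ κ(n) for all m ≥ 0. -/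
open Matrix

lemma foldr_nonneg (l : List ℕ) :
    ∀ i j : Fin 2, 0 ≤ (l.foldr (fun i M => A i * M) (1 : Matrix (Fin 2) (Fin 2) ℤ)) i j := by
  induction l with
  | nil => intro i j; fin_cases i <;> fin_cases j <;> simp [Matrix.one_apply]
  | cons a t ih =>
    intro i j
    simp only [List.foldr_cons, Matrix.mul_apply]
    apply Finset.sum_nonneg
    intro x _
    apply mul_nonneg
    · fin_cases i <;> fin_cases x <;> simp [A] <;> positivity
    · exact ih x j

/-- For all `n ≥ 1`: `κ(kn) ≥ κ(n)`, `κ(kn + (k−1)) ≥ k·κ(n)`, and consequently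
`κ(k^m·n) ≥ κ(n)` for all `m ≥ 0`. -/
theorem stmt19 (k : ℕ) (hk : 2 ≤ k) (n : ℕ) (hn : 1 ≤ n) :
    kap k n ≤ kap k (k * n) ∧
    (k : ℤ) * kap k n ≤ kap k (k * n + (k - 1)) ∧
    ∀ m : ℕ, kap k n ≤ kap k (k ^ m * n) := by
  have hk1 : 1 < k := hk
  have hk0 : 0 < k := by omega
  have key : ∀ n : ℕ, 1 ≤ n → kap k n ≤ kap k (k * n) ∧
      (k : ℤ) * kap k n ≤ kap k (k * n + (k - 1)) := by
    intro n hn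
    set P := (Nat.digits k n).foldr (fun i M => A i * M) (1 : Matrix (Fin 2) (Fin 2) ℤ) with hP
    have h1 : Nat.digits k (k * n) = 0 :: Nat.digits k n := by
      rw [Nat.digits_def' hk1 (by positivity), Nat.mul_mod_right,
        Nat.mul_div_cancel_left _ hk0]
    have h2 : Nat.digits k (k * n + (k - 1)) = (k - 1) :: Nat.digits k n := by
      rw [Nat.digits_def' hk1 (by positivity)]
      congr 1
      · rw [Nat.add_comm, Nat.add_mul_mod_self_left, Nat.mod_eq_of_lt (by omega)]
      · rw [Nat.add_comm, Nat.add_mul_div_left _ _ hk0, Nat.div_eq_of_lt (by omega),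
          Nat.zero_add]
    have ent : ∀ (a : ℕ) (M : Matrix (Fin 2) (Fin 2) ℤ),
        (A a * M) 0 0 = ((a : ℤ) + 1) * M 0 0 + M 1 0 := by
      intro a M
      rw [Matrix.mul_apply, Fin.sum_univ_two]
      simp [A]
    have e1 : kap k (k * n) = P 0 0 + P 1 0 := by
      show (List.foldr (fun i M => A i * M) (1 : Matrix (Fin 2) (Fin 2) ℤ) (Nat.digits k (k * n))) 0 0 = _
      rw [h1, List.foldr_cons, ← hP, ent]
      norm_num
    have e2 : kap k (k * n + (k - 1)) = (k : ℤ) * P 0 0 + P 1 0 := by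
      have hc : ((k - 1 : ℕ) : ℤ) + 1 = (k : ℤ) := by
        have : ((k - 1 : ℕ) : ℤ) = (k : ℤ) - 1 := by
          push_cast [Nat.cast_sub (by omega : 1 ≤ k)]; ring
        rw [this]; ring
      show (List.foldr (fun i M => A i * M) (1 : Matrix (Fin 2) (Fin 2) ℤ) (Nat.digits k (k * n + (k - 1)))) 0 0 = _
      rw [h2, List.foldr_cons, ← hP, ent, hc]
    have hnn := foldr_nonneg (Nat.digits k n) 1 0
    have ekn : kap k n = P 0 0 := rfl
    constructor
    · rw [ekn, e1]; linarith
    · rw [ekn, e2]; linarith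
  refine ⟨(key n hn).1, (key n hn).2, ?_⟩
  intro m
  induction m with
  | zero => simp
  | succ m ih =>
    calc kap k n ≤ kap k (k ^ m * n) := ih
      _ ≤ kap k (k * (k ^ m * n)) := (key _ (Nat.mul_pos (pow_pos hk0 m) hn)).1
      _ = kap k (k ^ (m + 1) * n) := by ring_nf
end
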